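/- Let α, β < 0, δ > 0, and ε ∈ (0, δ) with α - ε < 0 and β - ε < 0. Let d : [0,∞) → ℝ be bounded measurable. Then for every t ≥ 0, |∫₀ᵗ e^{-δ(t-s)}(e^{α(t-s)} - e^{β(t-s)}) d(s) ds| ≤ (1/|α - ε| + 1/|β - ε|) · sup_{0 ≤ s ≤ t}(e^{-(δ-ε)(t-s)} |d(s)|). -/
import Mathlib


open Real MeasureTheory

lemma exp_int_aux (c t : ℝ) (hc : c < 0) (ht : 0 ≤ t) :
    ∫ s in (0:ℝ)..t, Real.exp (c * (t - s)) ≤ 1 / |c| := by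
  have h1 : (∫ s in (0:ℝ)..t, Real.exp (c * (t - s)))
      = ∫ s in (0:ℝ)..t, Real.exp (c * s) := by
    have := intervalIntegral.integral_comp_sub_left (a := (0:ℝ)) (b := t)
      (fun u => Real.exp (c * u)) t
    simpa using this
  have h2 : (∫ s in (0:ℝ)..t, Real.exp (c * s)) = (Real.exp (c * t) - 1) / c := by
    have hc' : c ≠ 0 := ne_of_lt hc
    have := _root_.intervalIntegral.integral_comp_mul_left (a := (0:ℝ)) (b := t) (c := c)
      Real.exp hc'
    simp only [integral_exp, mul_zero, Real.exp_zero, smul_eq_mul] at this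
    rw [this]; field_simp
  rw [h1, h2, abs_of_neg hc]
  have h3 : (Real.exp (c * t) - 1) / c = (1 - Real.exp (c * t)) / (-c) := by ring
  rw [h3]
  gcongr
  · linarith
  · linarith [Real.exp_pos (c * t)]

/-- Integral estimate for the term `𝒥` in the ISS proof. -/
theorem stmt_6 (α β δ ε : ℝ) (hα : α < 0) (hβ : β < 0) (hδ : 0 < δ)
    (hε : 0 < ε) (hεδ : ε < δ) (hαε : α - ε < 0) (hβε : β - ε < 0)
    (d : ℝ → ℝ) (hmeas : Measurable d) (hbdd : ∃ B : ℝ, ∀ s : ℝ, 0 ≤ s → |d s| ≤ B) :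
    ∀ t : ℝ, 0 ≤ t →
      |∫ s in (0:ℝ)..t, Real.exp (-δ * (t - s)) *
          (Real.exp (α * (t - s)) - Real.exp (β * (t - s))) * d s| ≤
        (1 / |α - ε| + 1 / |β - ε|) *
          sSup ((fun s => Real.exp (-(δ - ε) * (t - s)) * |d s|) '' Set.Icc 0 t) := by
  intro t ht
  obtain ⟨B, hB⟩ := hbdd
  set f : ℝ → ℝ := fun s => Real.exp (-δ * (t - s)) *
      (Real.exp (α * (t - s)) - Real.exp (β * (t - s))) * d s with hf_def
  set S : Set ℝ := (fun s => Real.exp (-(δ - ε) * (t - s)) * |d s|) '' Set.Icc 0 t with hS_def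
  set M : ℝ := sSup S with hM_def
  have hSne : S.Nonempty := ⟨_, ⟨t, ⟨ht, le_refl t⟩, rfl⟩⟩
  have hSbdd : BddAbove S := by
    refine ⟨B, ?_⟩
    rintro x ⟨s, hs, rfl⟩
    have h1 : Real.exp (-(δ - ε) * (t - s)) ≤ 1 := by
      apply Real.exp_le_one_iff.mpr
      nlinarith [hs.2]
    calc Real.exp (-(δ - ε) * (t - s)) * |d s| ≤ 1 * |d s| :=
          mul_le_mul_of_nonneg_right h1 (abs_nonneg _)
      _ = |d s| := one_mul _
      _ ≤ B := hB s hs.1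
  have hMmem : ∀ s ∈ Set.Icc (0:ℝ) t, Real.exp (-(δ - ε) * (t - s)) * |d s| ≤ M :=
    fun s hs => le_csSup hSbdd ⟨s, hs, rfl⟩
  have hM0 : 0 ≤ M :=
    le_trans (mul_nonneg (Real.exp_pos _).le (abs_nonneg _)) (hMmem t ⟨ht, le_refl t⟩)
  -- the dominating function
  set g : ℝ → ℝ := fun s =>
    (Real.exp ((α - ε) * (t - s)) + Real.exp ((β - ε) * (t - s))) * M with hg_def
  have hgcont : Continuous g := by fun_prop
  have hgint : IntervalIntegrable g volume 0 t := hgcont.intervalIntegrable 0 t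
  -- integrability of f
  have hfmeas : Measurable f := by fun_prop
  have hfint : IntervalIntegrable f volume 0 t := by
    rw [intervalIntegrable_iff_integrableOn_Ioc_of_le ht]
    apply Measure.integrableOn_of_bounded (M := 2 * B) measure_Ioc_lt_top.ne
      hfmeas.aestronglyMeasurable
    rw [ae_restrict_iff' measurableSet_Ioc]
    filter_upwards with s hs
    have hts : 0 ≤ t - s := by linarith [hs.2]
    have e1 : Real.exp (-δ * (t - s)) ≤ 1 := Real.exp_le_one_iff.mpr (by nlinarith)
    have e2 : Real.exp (α * (t - s)) ≤ 1 := Real.exp_le_one_iff.mpr (by nlinarith)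
    have e3 : Real.exp (β * (t - s)) ≤ 1 := Real.exp_le_one_iff.mpr (by nlinarith)
    have hds : |d s| ≤ B := hB s hs.1.le
    have h0 : ‖f s‖ = Real.exp (-δ * (t - s)) *
        |Real.exp (α * (t - s)) - Real.exp (β * (t - s))| * |d s| := by
      rw [Real.norm_eq_abs, hf_def]
      rw [abs_mul, abs_mul, abs_of_pos (Real.exp_pos _)]
    rw [h0]
    have habs : |Real.exp (α * (t - s)) - Real.exp (β * (t - s))| ≤ 2 := by
      rw [abs_sub_le_iff]
      constructor <;> nlinarith [Real.exp_pos (α * (t - s)), Real.exp_pos (β * (t - s))]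
    have h1 : Real.exp (-δ * (t - s)) *
        |Real.exp (α * (t - s)) - Real.exp (β * (t - s))| ≤ 1 * 2 :=
      mul_le_mul e1 habs (abs_nonneg _) zero_le_one
    calc Real.exp (-δ * (t - s)) *
        |Real.exp (α * (t - s)) - Real.exp (β * (t - s))| * |d s|
        ≤ (1 * 2) * |d s| := mul_le_mul_of_nonneg_right h1 (abs_nonneg _)
      _ = 2 * |d s| := by ring
      _ ≤ 2 * B := by linarith [hB s hs.1.le, abs_nonneg (d s)]
  -- pointwise bound |f s| ≤ g s on [0, t]
  have hptwise : ∀ s ∈ Set.Icc (0:ℝ) t, |f s| ≤ g s := by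
    intro s hs
    have key : |f s| ≤ (Real.exp ((α - ε) * (t - s)) + Real.exp ((β - ε) * (t - s))) *
        (Real.exp (-(δ - ε) * (t - s)) * |d s|) := by
      rw [hf_def]
      simp only [abs_mul, abs_of_pos (Real.exp_pos (-δ * (t - s)))]
      have habs : |Real.exp (α * (t - s)) - Real.exp (β * (t - s))| ≤
          Real.exp (α * (t - s)) + Real.exp (β * (t - s)) := by
        rw [abs_sub_le_iff]
        constructor <;> nlinarith [Real.exp_pos (α * (t - s)), Real.exp_pos (β * (t - s))]
      have step : Real.exp (-δ * (t - s)) *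
          |Real.exp (α * (t - s)) - Real.exp (β * (t - s))| ≤
          Real.exp (-δ * (t - s)) * (Real.exp (α * (t - s)) + Real.exp (β * (t - s))) :=
        mul_le_mul_of_nonneg_left habs (Real.exp_pos _).le
      have hid : Real.exp (-δ * (t - s)) * (Real.exp (α * (t - s)) + Real.exp (β * (t - s)))
          = (Real.exp ((α - ε) * (t - s)) + Real.exp ((β - ε) * (t - s))) *
            Real.exp (-(δ - ε) * (t - s)) := by
        rw [mul_add, add_mul, ← Real.exp_add, ← Real.exp_add, ← Real.exp_add, ← Real.exp_add]
        ring_nf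
      calc Real.exp (-δ * (t - s)) *
          |Real.exp (α * (t - s)) - Real.exp (β * (t - s))| * |d s|
          ≤ Real.exp (-δ * (t - s)) *
            (Real.exp (α * (t - s)) + Real.exp (β * (t - s))) * |d s| :=
            mul_le_mul_of_nonneg_right step (abs_nonneg _)
        _ = (Real.exp ((α - ε) * (t - s)) + Real.exp ((β - ε) * (t - s))) *
            (Real.exp (-(δ - ε) * (t - s)) * |d s|) := by rw [hid]; ring
    refine key.trans ?_
    exact mul_le_mul_of_nonneg_left (hMmem s hs)
      (by positivity)
  -- put everything together
  have step1 : |∫ s in (0:ℝ)..t, f s| ≤ ∫ s in (0:ℝ)..t, |f s| := by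
    have := intervalIntegral.norm_integral_le_integral_norm (f := f) (a := 0) (b := t)
      (μ := volume) ht
    simpa [Real.norm_eq_abs] using this
  have step2 : (∫ s in (0:ℝ)..t, |f s|) ≤ ∫ s in (0:ℝ)..t, g s :=
    intervalIntegral.integral_mono_on ht hfint.abs hgint hptwise
  have step3 : (∫ s in (0:ℝ)..t, g s) ≤ (1 / |α - ε| + 1 / |β - ε|) * M := by
    have e1 : IntervalIntegrable (fun s => Real.exp ((α - ε) * (t - s))) volume 0 t :=
      (by fun_prop : Continuous fun s => Real.exp ((α - ε) * (t - s))).intervalIntegrable 0 t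
    have e2 : IntervalIntegrable (fun s => Real.exp ((β - ε) * (t - s))) volume 0 t :=
      (by fun_prop : Continuous fun s => Real.exp ((β - ε) * (t - s))).intervalIntegrable 0 t
    have hsplit : (∫ s in (0:ℝ)..t, g s) =
        ((∫ s in (0:ℝ)..t, Real.exp ((α - ε) * (t - s))) +
         (∫ s in (0:ℝ)..t, Real.exp ((β - ε) * (t - s)))) * M := by
      rw [hg_def]
      simp only [add_mul]
      rw [intervalIntegral.integral_add (e1.mul_const M) (e2.mul_const M),
        intervalIntegral.integral_mul_const, intervalIntegral.integral_mul_const]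
    rw [hsplit]
    apply mul_le_mul_of_nonneg_right _ hM0
    exact add_le_add (exp_int_aux _ t hαε ht) (exp_int_aux _ t hβε ht)
  exact (step1.trans step2).trans step3
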